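/- arXiv:1506.00157 — 2 statements merged into one kernel-verified Lean document; each statement's English description precedes it below -/
import Mathlib

section
/- Let d ≥ 2 and k ∈ {1,…,d−1}, and let φ(t) = (1−|t|²)^{1/2} for |t| ≤ 1. For every τ > 0 and ε > 0 there exists η > 0 with the following property: for every τ-admissible triple (r₁,r₂,r₃) of positive reals there is a measurable partition 𝔹_{d−k} = 𝒢 ∪ ℬ of the closed unit ball of ℝ^{d−k} with |ℬ| < ε such that for every x'₃ ∈ 𝒢, the (d−k)-dimensional Lebesgue measure of the set of x'₁ ∈ ℝ^{d−k} such that, setting x'₂ = −(r₁x'₁ + r₃x'₃)/r₂, one has |x'₁| ≤ 1, |x'₂| ≤ 1, and the triple (r₁φ(x'₁), r₂φ(x'₂), r₃φ(x'₃)) is η-admissible, is at least η. -/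
open MeasureTheory Metric Filter
open scoped ENNReal Pointwise Topology

noncomputable section

abbrev Euc (d : ℕ) : Type := EuclideanSpace ℝ (Fin d)

/-- The Riesz–Sobolev trilinear form
`𝒯(E₁,E₂,E₃) = ∫∫ 1_{E₁}(x) 1_{E₂}(y) 1_{E₃}(-x-y) dx dy`. -/
noncomputable def Ttri {d : ℕ} (E₁ E₂ E₃ : Set (Euc d)) : ℝ :=
  ∫ x : Euc d, ∫ y : Euc d,
    E₁.indicator (fun _ => (1:ℝ)) x * E₂.indicator (fun _ => (1:ℝ)) y *
      E₃.indicator (fun _ => (1:ℝ)) (-x - y)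

/-- `E^•` : the closed ball centered at `0` with the same volume as `E`. -/
noncomputable def ballSym {d : ℕ} (E : Set (Euc d)) : Set (Euc d) :=
  Metric.closedBall 0
    (((volume E).toReal / (volume (Metric.closedBall (0 : Euc d) 1)).toReal) ^ (1 / (d:ℝ)))

/-- `τ`-admissibility of an ordered triple of positive reals. -/
def TauAdm (τ r₁ r₂ r₃ : ℝ) : Prop :=
  0 < r₁ ∧ 0 < r₂ ∧ 0 < r₃ ∧
  r₁ + r₂ ≥ r₃ + τ * max r₁ (max r₂ r₃) ∧
  r₂ + r₃ ≥ r₁ + τ * max r₁ (max r₂ r₃) ∧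
  r₁ + r₃ ≥ r₂ + τ * max r₁ (max r₂ r₃)

/-- `τ`-admissibility of an ordered triple of sets. -/
def TauAdmSets (d : ℕ) (τ : ℝ) (E₁ E₂ E₃ : Set (Euc d)) : Prop :=
  TauAdm τ ((volume E₁).toReal ^ (1/(d:ℝ))) ((volume E₂).toReal ^ (1/(d:ℝ)))
    ((volume E₃).toReal ^ (1/(d:ℝ)))

/-- Strict admissibility of a triple of positive reals. -/
def StrictAdm (r₁ r₂ r₃ : ℝ) : Prop :=
  0 < r₁ ∧ 0 < r₂ ∧ 0 < r₃ ∧ r₁ < r₂ + r₃ ∧ r₂ < r₁ + r₃ ∧ r₃ < r₁ + r₂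

/-- An ellipsoid: image of the closed unit ball under an invertible affine map. -/
def IsEllipsoid (d : ℕ) (S : Set (Euc d)) : Prop :=
  ∃ (A : Euc d ≃ₗ[ℝ] Euc d) (v : Euc d),
    S = (fun x => A x + v) '' Metric.closedBall 0 1

/-- An ellipsoid centered at `0`. -/
def IsCenteredEllipsoid (d : ℕ) (S : Set (Euc d)) : Prop :=
  ∃ A : Euc d ≃ₗ[ℝ] Euc d, S = (fun x => A x) '' Metric.closedBall 0 1

/-- Assemble a point of `ℝ^d` from its first `d-1` coordinates and its last one. -/
def join (d : ℕ) (x' : Euc (d-1)) (t : ℝ) : Euc d :=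
  WithLp.toLp 2 (fun i => if h : (i:ℕ) < d - 1 then x' ⟨i, h⟩ else t)

/-- The first `d-1` coordinates. -/
def projHead (d : ℕ) (x : Euc d) : Euc (d-1) :=
  WithLp.toLp 2 (fun i => x ⟨i, lt_of_lt_of_le i.2 (Nat.sub_le d 1)⟩)

/-- The last coordinate. -/
def lastC (d : ℕ) (x : Euc d) : ℝ :=
  if h : 0 < d then x ⟨d-1, Nat.sub_lt h one_pos⟩ else 0

/-- Vertical slice `E^{x'} = {t : (x',t) ∈ E}`. -/
def sliceV (d : ℕ) (E : Set (Euc d)) (x' : Euc (d-1)) : Set ℝ :=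
  {t : ℝ | join d x' t ∈ E}

/-- Horizontal slice `E_t = {y' : (y',t) ∈ E}`. -/
def sliceH (d : ℕ) (E : Set (Euc d)) (t : ℝ) : Set (Euc (d-1)) :=
  {y' | join d y' t ∈ E}

/-- Steiner symmetrization in the last coordinate. -/
noncomputable def steiner (d : ℕ) (E : Set (Euc d)) : Set (Euc d) :=
  {x | ∃ x' t, x = join d x' t ∧ 0 < volume (sliceV d E x') ∧
      ENNReal.ofReal (2 * |t|) ≤ volume (sliceV d E x')}

/-- Schwarz symmetrization in the first `d-1` coordinates. -/
noncomputable def schwarz (d : ℕ) (E : Set (Euc d)) : Set (Euc d) :=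
  {x | ∃ x' t, x = join d x' t ∧ 0 < volume (sliceH d E t) ∧
      ENNReal.ofReal
        ((volume (Metric.closedBall (0 : Euc (d-1)) 1)).toReal * ‖x'‖ ^ (d-1))
        ≤ volume (sliceH d E t)}

/-- `E^{†★} = (E^†)^★`. -/
noncomputable def dagStar (d : ℕ) (E : Set (Euc d)) : Set (Euc d) :=
  steiner d (schwarz d E)

/-- `E'_k = {x' : 2^k ≤ |E^{x'}| < 2^{k+1}}`. -/
noncomputable def layerBase (d : ℕ) (E : Set (Euc d)) (k : ℤ) : Set (Euc (d-1)) :=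
  {x' | ENNReal.ofReal ((2:ℝ) ^ k) ≤ volume (sliceV d E x') ∧
        volume (sliceV d E x') < ENNReal.ofReal ((2:ℝ) ^ (k+1))}

/-- `E_k = {x ∈ E : x' ∈ E'_k}`. -/
noncomputable def layer (d : ℕ) (E : Set (Euc d)) (k : ℤ) : Set (Euc d) :=
  {x ∈ E | projHead d x ∈ layerBase d E k}

/-- A special dilation `(x₁,…,x_d) ↦ (r x₁,…, r x_{d-1}, ρ x_d)`. -/
def spDil (d : ℕ) (r ρ : ℝ) (x : Euc d) : Euc d :=
  WithLp.toLp 2 (fun i => if (i:ℕ) < d - 1 then r * x i else ρ * x i)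

/-- A vertical skew-shift `(x', x_d) ↦ (x', x_d + ℓ(x'))`. -/
noncomputable def skewShift (d : ℕ) (ℓ : Euc (d-1) →ᵃ[ℝ] ℝ) (x : Euc d) : Euc d :=
  join d (projHead d x) (lastC d x + ℓ (projHead d x))

/-- Assemble a point of `ℝ^d = ℝ^{d-k} × ℝ^k`. -/
def joinP (d k : ℕ) (y : Euc (d-k)) (z : Euc k) : Euc d :=
  WithLp.toLp 2 (fun i => if h : (i:ℕ) < d - k then y ⟨i, h⟩
    else if h2 : (i:ℕ) - (d-k) < k then z ⟨(i:ℕ) - (d-k), h2⟩ else 0)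

/-- Slice `E^{y} = {z ∈ ℝ^k : (y,z) ∈ E}`. -/
def sliceK (d k : ℕ) (E : Set (Euc d)) (y : Euc (d-k)) : Set (Euc k) :=
  {z | joinP d k y z ∈ E}

/-- Projection `π(E) = {y : E^y ≠ ∅}`. -/
def projK (d k : ℕ) (E : Set (Euc d)) : Set (Euc (d-k)) :=
  {y | (sliceK d k E y).Nonempty}

/-- The closed ball centered at `0` of prescribed volume `γ` (a point if `γ = 0`). -/
noncomputable def ballOfVol (d : ℕ) (γ : ℝ) : Set (Euc d) :=
  Metric.closedBall 0
    ((γ / (volume (Metric.closedBall (0 : Euc d) 1)).toReal) ^ (1/(d:ℝ)))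

/-- `Λ_d(γ₁,γ₂,γ₃) = 𝒯(B₁,B₂,B₃)` for balls of volumes `γ_j` centered at `0`. -/
noncomputable def Lam (d : ℕ) (γ₁ γ₂ γ₃ : ℝ) : ℝ :=
  Ttri (ballOfVol d γ₁) (ballOfVol d γ₂) (ballOfVol d γ₃)

/-- `rℰ + v`. -/
def scaleShift (d : ℕ) (r : ℝ) (v : Euc d) (S : Set (Euc d)) : Set (Euc d) :=
  (fun x => r • x + v) '' S

end

/-!
Both the `τ`-admissibility of `(r₁, r₂, r₃)` and the set of admissible `x₁` are invariant under
scaling `r`, so we may assume `‖r‖ = 1`; then `r` ranges over a compact set of strictly admissible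
triples. Take `𝒢` to be a closed ball of radius `s < 1`, so that `ℬ` is a thin annulus.

For fixed `r` and `‖x₃‖ < 1` there is an explicit good `x₁`: take side vectors
`v₁ + v₂ + v₃ = 0` of a planar triangle with `|vᵢ| = rᵢ` and `v₃ = (r₃, 0)`, and put
`rᵢ xᵢ = (vᵢ)₁ • x₃` (first coordinates). Then `rᵢ φ(xᵢ) = |diag(φ(x₃), 1) vᵢ|`, so the three
heights are the side lengths of a nondegenerate triangle. Strict admissibility is an open
condition, jointly in the sides and in `η`, so it survives for small `η`, nearby parameters and
`x₁` in a ball around the witness; this bounds the measure from below locally uniformly, and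
compactness makes the bound global.
-/

lemma TauAdm.mono {η η' s₁ s₂ s₃ : ℝ} (h : TauAdm η' s₁ s₂ s₃) (hη : η ≤ η') :
    TauAdm η s₁ s₂ s₃ := by
  obtain ⟨h₁, h₂, h₃, h₄, h₅, h₆⟩ := h
  have := mul_le_mul_of_nonneg_right hη (h₁.le.trans (le_max_left s₁ (max s₂ s₃)))
  exact ⟨h₁, h₂, h₃, by linarith, by linarith, by linarith⟩

lemma TauAdm.mul {η c s₁ s₂ s₃ : ℝ} (h : TauAdm η s₁ s₂ s₃) (hc : 0 < c) :
    TauAdm η (c * s₁) (c * s₂) (c * s₃) := by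
  obtain ⟨h₁, h₂, h₃, h₄, h₅, h₆⟩ := h
  rw [TauAdm, ← mul_max_of_nonneg _ _ hc.le, ← mul_max_of_nonneg _ _ hc.le]
  exact ⟨mul_pos hc h₁, mul_pos hc h₂, mul_pos hc h₃, by nlinarith, by nlinarith, by nlinarith⟩

lemma tauAdm_mul_iff {η c s₁ s₂ s₃ : ℝ} (hc : 0 < c) :
    TauAdm η (c * s₁) (c * s₂) (c * s₃) ↔ TauAdm η s₁ s₂ s₃ :=
  ⟨fun h => by simpa only [inv_mul_cancel_left₀ hc.ne'] using h.mul (inv_pos.2 hc),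
    fun h => h.mul hc⟩

def StrictTauAdm (η s₁ s₂ s₃ : ℝ) : Prop :=
  0 < s₁ ∧ 0 < s₂ ∧ 0 < s₃ ∧
  s₃ + η * max s₁ (max s₂ s₃) < s₁ + s₂ ∧
  s₁ + η * max s₁ (max s₂ s₃) < s₂ + s₃ ∧
  s₂ + η * max s₁ (max s₂ s₃) < s₁ + s₃

lemma StrictTauAdm.tauAdm {η s₁ s₂ s₃ : ℝ} (h : StrictTauAdm η s₁ s₂ s₃) :
    TauAdm η s₁ s₂ s₃ :=
  ⟨h.1, h.2.1, h.2.2.1, h.2.2.2.1.le, h.2.2.2.2.1.le, h.2.2.2.2.2.le⟩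

lemma strictTauAdm_zero_iff {s₁ s₂ s₃ : ℝ} : StrictTauAdm 0 s₁ s₂ s₃ ↔ StrictAdm s₁ s₂ s₃ := by
  simp only [StrictTauAdm, StrictAdm, zero_mul, add_zero]
  constructor <;> rintro ⟨h₁, h₂, h₃, h₄, h₅, h₆⟩ <;>
    exact ⟨h₁, h₂, h₃, by linarith, by linarith, by linarith⟩

lemma isOpen_setOf_strictTauAdm :
    IsOpen {q : ℝ × ℝ × ℝ × ℝ | StrictTauAdm q.1 q.2.1 q.2.2.1 q.2.2.2} := by
  simp only [StrictTauAdm]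
  refine (isOpen_lt continuous_const (by fun_prop)).and <| (isOpen_lt continuous_const
    (by fun_prop)).and <| (isOpen_lt continuous_const (by fun_prop)).and <|
    (isOpen_lt (by fun_prop) (by fun_prop)).and <| (isOpen_lt (by fun_prop) (by fun_prop)).and <|
    isOpen_lt (by fun_prop) (by fun_prop)

lemma sqrt_add_sq_lt_of_det_ne_zero {a₁ a₂ b₁ b₂ : ℝ} (h : a₁ * b₂ - a₂ * b₁ ≠ 0) :
    √((a₁ + b₁) ^ 2 + (a₂ + b₂) ^ 2) < √(a₁ ^ 2 + a₂ ^ 2) + √(b₁ ^ 2 + b₂ ^ 2) := by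
  have ha := Real.sq_sqrt (by positivity : 0 ≤ a₁ ^ 2 + a₂ ^ 2)
  have hb := Real.sq_sqrt (by positivity : 0 ≤ b₁ ^ 2 + b₂ ^ 2)
  -- Lagrange's identity: `|a|²|b|² = ⟨a, b⟩² + det(a, b)²`.
  have hinner : a₁ * b₁ + a₂ * b₂ < √(a₁ ^ 2 + a₂ ^ 2) * √(b₁ ^ 2 + b₂ ^ 2) := by
    rw [← Real.sqrt_mul (by positivity)]
    refine (le_abs_self _).trans_lt ((Real.lt_sqrt (abs_nonneg _)).2 ?_)
    nlinarith [sq_abs (a₁ * b₁ + a₂ * b₂), sq_pos_of_ne_zero h]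
  rw [Real.sqrt_lt (by positivity) (by positivity)]
  nlinarith

lemma strictAdm_sqrt_of_det_ne_zero {a₁ a₂ b₁ b₂ : ℝ} (h : a₁ * b₂ - a₂ * b₁ ≠ 0) :
    StrictAdm √(a₁ ^ 2 + a₂ ^ 2) √(b₁ ^ 2 + b₂ ^ 2) √((a₁ + b₁) ^ 2 + (a₂ + b₂) ^ 2) := by
  have h₃ := sqrt_add_sq_lt_of_det_ne_zero h
  have h₁ := sqrt_add_sq_lt_of_det_ne_zero (a₁ := a₁ + b₁) (a₂ := a₂ + b₂) (b₁ := -b₁)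
    (b₂ := -b₂) (by contrapose! h; linarith)
  have h₂ := sqrt_add_sq_lt_of_det_ne_zero (a₁ := -a₁) (a₂ := -a₂) (b₁ := a₁ + b₁)
    (b₂ := a₂ + b₂) (by contrapose! h; linarith)
  simp only [add_neg_cancel_right, neg_add_cancel_left, neg_sq] at h₁ h₂
  exact ⟨by linarith, by linarith, by linarith, by linarith, by linarith, h₃⟩

section Slice

variable {E : Type*} [NormedAddCommGroup E]

/-- The height `φ(x) = (1 - ‖x‖²)^{1/2}` of the unit hemisphere (`0` outside the unit ball). -/
noncomputable def hemisphere (x : E) : ℝ := √(1 - ‖x‖ ^ 2)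

lemma norm_lt_one_of_mul_hemisphere_pos {r : ℝ} {x : E} (h : 0 < r * hemisphere x) : ‖x‖ < 1 := by
  have hpos : 0 < hemisphere x :=
    (Real.sqrt_nonneg _).lt_of_ne fun h0 => by simp [hemisphere, ← h0] at h
  nlinarith [Real.sqrt_pos.1 hpos, norm_nonneg x]

variable [NormedSpace ℝ E]

lemma mul_hemisphere_smul {r : ℝ} (hr : 0 ≤ r) (t : ℝ) {x : E} (hx : ‖x‖ ≤ 1) :
    r * hemisphere (t • x) = √((r * t * hemisphere x) ^ 2 + (r ^ 2 - (r * t) ^ 2)) := by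
  have hx' : 0 ≤ 1 - ‖x‖ ^ 2 := by nlinarith [norm_nonneg x]
  calc r * hemisphere (t • x) = √(r ^ 2 * (1 - ‖t • x‖ ^ 2)) := by
        rw [Real.sqrt_mul (sq_nonneg r), Real.sqrt_sq hr, hemisphere]
    _ = _ := by
        rw [norm_smul, Real.norm_eq_abs, mul_pow, sq_abs, mul_pow, hemisphere, Real.sq_sqrt hx']
        congr 1
        ring

/-- The parameters are packed as `p = ((r₁, r₂, r₃), x₃)`, so that the compactness argument runs
in a single space; `balancePoint p x₁` is the `x₂` with `r₁ x₁ + r₂ x₂ + r₃ x₃ = 0`. -/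
noncomputable def balancePoint (p : (ℝ × ℝ × ℝ) × E) (x₁ : E) : E :=
  -(p.1.2.1⁻¹ • (p.1.1 • x₁ + p.1.2.2 • p.2))

noncomputable def heights (p : (ℝ × ℝ × ℝ) × E) (x₁ : E) : ℝ × ℝ × ℝ :=
  (p.1.1 * hemisphere x₁, p.1.2.1 * hemisphere (balancePoint p x₁), p.1.2.2 * hemisphere p.2)

def admissibleSlice (η : ℝ) (p : (ℝ × ℝ × ℝ) × E) : Set E :=
  {x₁ | ‖x₁‖ ≤ 1 ∧ ‖balancePoint p x₁‖ ≤ 1 ∧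
    TauAdm η (heights p x₁).1 (heights p x₁).2.1 (heights p x₁).2.2}

lemma mem_admissibleSlice_of_tauAdm {η : ℝ} {p : (ℝ × ℝ × ℝ) × E} {x₁ : E}
    (h : TauAdm η (heights p x₁).1 (heights p x₁).2.1 (heights p x₁).2.2) :
    x₁ ∈ admissibleSlice η p :=
  ⟨(norm_lt_one_of_mul_hemisphere_pos h.1).le, (norm_lt_one_of_mul_hemisphere_pos h.2.1).le, h⟩

lemma admissibleSlice_anti {η η' : ℝ} (hη : η ≤ η') (p : (ℝ × ℝ × ℝ) × E) :
    admissibleSlice η' p ⊆ admissibleSlice η p :=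
  fun _ hx => ⟨hx.1, hx.2.1, hx.2.2.mono hη⟩

lemma admissibleSlice_smul {η c : ℝ} (hc : 0 < c) (r : ℝ × ℝ × ℝ) (x₃ : E) :
    admissibleSlice η (c • r, x₃) = admissibleSlice η (r, x₃) := by
  have hbal : ∀ x₁, balancePoint (c • r, x₃) x₁ = balancePoint (r, x₃) x₁ := by
    intro x₁
    simp only [balancePoint, Prod.smul_fst, Prod.smul_snd, smul_eq_mul]
    congr 1
    match_scalars <;> field_simp
  ext x₁
  simp only [admissibleSlice, heights, hbal, Prod.smul_fst, Prod.smul_snd, smul_eq_mul, mul_assoc,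
    tauAdm_mul_iff hc]

lemma exists_strictAdm_heights {r₁ r₂ r₃ : ℝ} (hr : StrictAdm r₁ r₂ r₃) {x₃ : E} (hx₃ : ‖x₃‖ < 1) :
    ∃ x₁ : E, StrictAdm (heights ((r₁, r₂, r₃), x₃) x₁).1 (heights ((r₁, r₂, r₃), x₃) x₁).2.1
      (heights ((r₁, r₂, r₃), x₃) x₁).2.2 := by
  obtain ⟨h₁, h₂, h₃, t₁, t₂, t₃⟩ := hr
  -- `(c, y)`, `-(c + r₃, y)` and `(r₃, 0)` are the side vectors of a triangle with side lengths
  -- `r₁, r₂, r₃`.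
  set c := (r₂ ^ 2 - r₁ ^ 2 - r₃ ^ 2) / (2 * r₃)
  have hc : c ^ 2 < r₁ ^ 2 := by
    have := mul_pos (mul_pos (by linarith : 0 < r₁ + r₃ - r₂) (by linarith : 0 < r₁ + r₃ + r₂))
      (mul_pos (by linarith : 0 < r₂ - r₁ + r₃) (by linarith : 0 < r₂ + r₁ - r₃))
    rw [div_pow, div_lt_iff₀ (by positivity)]
    nlinarith
  set y := √(r₁ ^ 2 - c ^ 2)
  have hy : y ^ 2 = r₁ ^ 2 - c ^ 2 := Real.sq_sqrt (by linarith)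
  have hy₀ : 0 < y := Real.sqrt_pos.2 (by linarith)
  have hc' : 2 * r₃ * c = r₂ ^ 2 - r₁ ^ 2 - r₃ ^ 2 := by
    simp only [c]; field_simp
  have hy' : r₂ ^ 2 - (c + r₃) ^ 2 = y ^ 2 := by
    rw [hy]; linear_combination -hc'
  have hA : 0 < hemisphere x₃ := Real.sqrt_pos.2 (by nlinarith [norm_nonneg x₃])
  refine ⟨(c / r₁) • x₃, ?_⟩
  have hbal : balancePoint ((r₁, r₂, r₃), x₃) ((c / r₁) • x₃) = (-(c + r₃) / r₂) • x₃ := by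
    simp only [balancePoint]
    match_scalars
    field_simp
  simp only [heights, hbal]
  rw [mul_hemisphere_smul h₁.le _ hx₃.le, mul_hemisphere_smul h₂.le _ hx₃.le]
  have e₁ : r₁ * (c / r₁) = c := by field_simp
  have e₂ : r₂ * (-(c + r₃) / r₂) = -(c + r₃) := by field_simp
  convert strictAdm_sqrt_of_det_ne_zero (a₁ := c * hemisphere x₃) (a₂ := y)
    (b₁ := -(c + r₃) * hemisphere x₃) (b₂ := -y) ?_ using 2
  · rw [e₁, hy]
  · rw [e₂, neg_sq (c + r₃), hy', neg_sq]
  · rw [show (c * hemisphere x₃ + -(c + r₃) * hemisphere x₃) ^ 2 + (y + -y) ^ 2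
      = (r₃ * hemisphere x₃) ^ 2 by ring, Real.sqrt_sq (by positivity)]
  · rw [show c * hemisphere x₃ * -y - y * (-(c + r₃) * hemisphere x₃)
      = y * r₃ * hemisphere x₃ by ring]
    positivity

lemma eventually_ofReal_le_measure_admissibleSlice [MeasurableSpace E] (μ : Measure E)
    [μ.IsOpenPosMeasure] {p₀ : (ℝ × ℝ × ℝ) × E} (hr : StrictAdm p₀.1.1 p₀.1.2.1 p₀.1.2.2)
    (hx : ‖p₀.2‖ < 1) :
    ∃ η > 0, ∀ᶠ p in 𝓝 p₀, ENNReal.ofReal η ≤ μ (admissibleSlice η p) := by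
  obtain ⟨⟨r₁, r₂, r₃⟩, x₃⟩ := p₀
  obtain ⟨x₁, hx₁⟩ := exists_strictAdm_heights hr hx
  set F : ℝ × ((ℝ × ℝ × ℝ) × E) × E → ℝ × ℝ × ℝ × ℝ := fun z => (z.1, heights z.2.1 z.2.2)
  have hF : ContinuousAt F (0, ((r₁, r₂, r₃), x₃), x₁) := by
    have : r₂ ≠ 0 := hr.2.1.ne'
    simp only [F, heights, hemisphere, balancePoint]
    fun_prop (disch := assumption)
  have hev := hF.preimage_mem_nhds (isOpen_setOf_strictTauAdm.mem_nhds
    (strictTauAdm_zero_iff.2 hx₁))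
  rw [nhds_prod_eq, nhds_prod_eq] at hev
  obtain ⟨P, hP, Q, hQ, hPQ⟩ := eventually_prod_iff.1 hev
  obtain ⟨Q₁, hQ₁, Q₂, hQ₂, hQ⟩ := eventually_prod_iff.1 hQ
  obtain ⟨ρ, hρ, hball⟩ := Metric.eventually_nhds_iff_ball.1 hQ₂
  have hsmall : ∀ᶠ η in 𝓝[>] (0 : ℝ), (η ∈ Set.Ioi 0 ∧ P η) ∧ ENNReal.ofReal η < μ (ball x₁ ρ) :=
    (eventually_mem_nhdsWithin.and (nhdsWithin_le_nhds hP)).and <| nhdsWithin_le_nhds <|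
      (ENNReal.tendsto_ofReal tendsto_id).eventually_lt_const
        (by simpa using measure_ball_pos μ x₁ hρ)
  obtain ⟨η, ⟨hη, hPη⟩, hηball⟩ := hsmall.exists
  refine ⟨η, hη, hQ₁.mono fun p hp => hηball.le.trans (measure_mono fun y hy => ?_)⟩
  exact mem_admissibleSlice_of_tauAdm (hPQ hPη (hQ hp (hball y hy))).tauAdm

lemma ofReal_le_measure_admissibleSlice_of_le [MeasurableSpace E] {μ : Measure E} {η η' : ℝ}
    {p : (ℝ × ℝ × ℝ) × E} (hη : η' ≤ η) (h : ENNReal.ofReal η ≤ μ (admissibleSlice η p)) :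
    ENNReal.ofReal η' ≤ μ (admissibleSlice η' p) :=
  (ENNReal.ofReal_le_ofReal hη).trans (h.trans (measure_mono (admissibleSlice_anti hη p)))

lemma IsCompact.exists_forall_ofReal_le_measure_admissibleSlice [MeasurableSpace E]
    (μ : Measure E) [μ.IsOpenPosMeasure] {K : Set ((ℝ × ℝ × ℝ) × E)} (hK : IsCompact K)
    (hadm : ∀ p ∈ K, StrictAdm p.1.1 p.1.2.1 p.1.2.2 ∧ ‖p.2‖ < 1) :
    ∃ η > 0, ∀ p ∈ K, ENNReal.ofReal η ≤ μ (admissibleSlice η p) := by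
  refine hK.induction_on
    (p := fun S => ∃ η > 0, ∀ p ∈ S, ENNReal.ofReal η ≤ μ (admissibleSlice η p))
    ⟨1, one_pos, by simp⟩ (fun S T hST ⟨η, hη, h⟩ => ⟨η, hη, fun p hp => h p (hST hp)⟩) ?_ ?_
  · rintro S T ⟨η, hη, hS⟩ ⟨η', hη', hT⟩
    refine ⟨min η η', lt_min hη hη', ?_⟩
    rintro p (hp | hp)
    · exact ofReal_le_measure_admissibleSlice_of_le (min_le_left _ _) (hS p hp)
    · exact ofReal_le_measure_admissibleSlice_of_le (min_le_right _ _) (hT p hp)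
  · intro p hp
    obtain ⟨η, hη, hev⟩ :=
      eventually_ofReal_le_measure_admissibleSlice μ (hadm p hp).1 (hadm p hp).2
    exact ⟨_, mem_nhdsWithin_of_mem_nhds hev, η, hη, fun q hq => hq⟩

def normalizedTauAdm (τ : ℝ) : Set (ℝ × ℝ × ℝ) :=
  {r | ‖r‖ ≤ 1 ∧ r.1 + τ ≤ r.2.1 + r.2.2 ∧ r.2.1 + τ ≤ r.1 + r.2.2 ∧ r.2.2 + τ ≤ r.1 + r.2.1}

lemma isCompact_normalizedTauAdm (τ : ℝ) : IsCompact (normalizedTauAdm τ) := by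
  refine (isCompact_closedBall 0 1).of_isClosed_subset ?_ fun r hr => mem_closedBall_zero_iff.2 hr.1
  exact (isClosed_le (by fun_prop) (by fun_prop)).and <|
    (isClosed_le (by fun_prop) (by fun_prop)).and <|
    (isClosed_le (by fun_prop) (by fun_prop)).and (isClosed_le (by fun_prop) (by fun_prop))

lemma strictAdm_of_mem_normalizedTauAdm {τ : ℝ} (hτ : 0 < τ) {r : ℝ × ℝ × ℝ}
    (hr : r ∈ normalizedTauAdm τ) : StrictAdm r.1 r.2.1 r.2.2 := by
  obtain ⟨-, h₁, h₂, h₃⟩ := hr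
  exact ⟨by linarith, by linarith, by linarith, by linarith, by linarith, by linarith⟩

lemma TauAdm.inv_norm_smul_mem_normalizedTauAdm {τ : ℝ} {r : ℝ × ℝ × ℝ}
    (h : TauAdm τ r.1 r.2.1 r.2.2) : ‖r‖⁻¹ • r ∈ normalizedTauAdm τ := by
  obtain ⟨h₁, h₂, h₃, h₄, h₅, h₆⟩ := h
  have hnorm : ‖r‖ = max r.1 (max r.2.1 r.2.2) := by
    rw [Prod.norm_def, Prod.norm_def, Real.norm_of_nonneg h₁.le, Real.norm_of_nonneg h₂.le,
      Real.norm_of_nonneg h₃.le]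
  have hpos : 0 < ‖r‖ := hnorm ▸ h₁.trans_le (le_max_left _ _)
  refine ⟨by rw [norm_smul, norm_inv, norm_norm, inv_mul_cancel₀ hpos.ne'], ?_⟩
  simp only [Prod.smul_fst, Prod.smul_snd, smul_eq_mul]
  rw [← hnorm] at h₄ h₅ h₆
  have key : ∀ a b c : ℝ, a + τ * ‖r‖ ≤ b + c → ‖r‖⁻¹ * a + τ ≤ ‖r‖⁻¹ * b + ‖r‖⁻¹ * c := by
    intro a b c h
    rw [← mul_add, ← le_sub_iff_add_le', ← mul_sub, le_inv_mul_iff₀ hpos]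
    linarith
  exact ⟨key _ _ _ (by linarith), key _ _ _ (by linarith), key _ _ _ (by linarith)⟩

lemma exists_forall_tauAdm_ofReal_le_measure_admissibleSlice [ProperSpace E] [MeasurableSpace E]
    (μ : Measure E) [μ.IsOpenPosMeasure] {τ s : ℝ} (hτ : 0 < τ) (hs : s < 1) :
    ∃ η > 0, ∀ r : ℝ × ℝ × ℝ, TauAdm τ r.1 r.2.1 r.2.2 → ∀ x₃ ∈ closedBall (0 : E) s,
      ENNReal.ofReal η ≤ μ (admissibleSlice η (r, x₃)) := by
  obtain ⟨η, hη, h⟩ := ((isCompact_normalizedTauAdm τ).prod (isCompact_closedBall 0 s)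
    ).exists_forall_ofReal_le_measure_admissibleSlice μ fun p hp =>
      ⟨strictAdm_of_mem_normalizedTauAdm hτ hp.1, (mem_closedBall_zero_iff.1 hp.2).trans_lt hs⟩
  refine ⟨η, hη, fun r hr x₃ hx₃ => ?_⟩
  have hr₀ : 0 < ‖r‖ := hr.1.trans_le ((Real.le_norm_self _).trans (norm_fst_le r))
  rw [← admissibleSlice_smul (inv_pos.2 hr₀)]
  exact h (_, x₃) ⟨hr.inv_norm_smul_mem_normalizedTauAdm, hx₃⟩

lemma exists_measure_closedBall_sdiff_lt [FiniteDimensional ℝ E] [MeasurableSpace E]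
    [BorelSpace E] (μ : Measure E) [μ.IsAddHaarMeasure] {ε : ℝ≥0∞} (hε : 0 < ε) :
    ∃ s < 1, μ (closedBall (0 : E) 1 \ closedBall 0 s) < ε := by
  have hball : μ (closedBall (0 : E) 1) ≠ ⊤ := measure_closedBall_lt_top.ne
  have hsdiff : ∀ s ∈ Set.Icc (0 : ℝ) 1, μ (closedBall (0 : E) 1 \ closedBall 0 s)
      = (1 - ENNReal.ofReal (s ^ Module.finrank ℝ E)) * μ (closedBall 0 1) := by
    rintro s ⟨hs₀, hs₁⟩
    rw [measure_sdiff (closedBall_subset_closedBall hs₁) measurableSet_closedBall.nullMeasurableSet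
      measure_closedBall_lt_top.ne, Measure.addHaar_closedBall' μ 0 hs₀,
      ENNReal.sub_mul fun _ _ => hball, one_mul]
  have hlim : Tendsto
      (fun s : ℝ => (1 - ENNReal.ofReal (s ^ Module.finrank ℝ E)) * μ (closedBall 0 1))
      (𝓝[<] 1) (𝓝 0) := by
    have := ENNReal.Tendsto.mul_const (ENNReal.Tendsto.sub tendsto_const_nhds
      (ENNReal.tendsto_ofReal ((continuous_pow (Module.finrank ℝ E)).tendsto 1))
      (Or.inl ENNReal.one_ne_top)) (Or.inr hball)
    simpa using this.mono_left nhdsWithin_le_nhds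
  obtain ⟨s, ⟨hs₁, hs⟩, hs₀⟩ := ((eventually_mem_nhdsWithin.and (hlim.eventually_lt_const hε)).and
    (Ioo_mem_nhdsLT (by norm_num : (0 : ℝ) < 1))).exists
  exact ⟨s, hs₁, hsdiff s ⟨hs₀.1.le, hs₁.le⟩ ▸ hs⟩

end Slice

theorem paininneck_general (d k : ℕ) (τ ε : ℝ) (hτ : 0 < τ) (hε : 0 < ε) :
    ∃ η : ℝ, 0 < η ∧
      ∀ r₁ r₂ r₃ : ℝ, TauAdm τ r₁ r₂ r₃ →
        ∃ G B : Set (Euc (d-k)), MeasurableSet G ∧ MeasurableSet B ∧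
          Disjoint G B ∧ G ∪ B = Metric.closedBall 0 1 ∧
          volume B < ENNReal.ofReal ε ∧
          ∀ x₃ ∈ G, ENNReal.ofReal η ≤
            volume {x₁ : Euc (d-k) | ‖x₁‖ ≤ 1 ∧ ‖-(r₂⁻¹ • (r₁ • x₁ + r₃ • x₃))‖ ≤ 1 ∧
              TauAdm η (r₁ * Real.sqrt (1 - ‖x₁‖^2))
                (r₂ * Real.sqrt (1 - ‖-(r₂⁻¹ • (r₁ • x₁ + r₃ • x₃))‖^2))
                (r₃ * Real.sqrt (1 - ‖x₃‖^2))} := by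
  obtain ⟨s, hs, hB⟩ := exists_measure_closedBall_sdiff_lt (volume : Measure (Euc (d - k)))
    (ENNReal.ofReal_pos.2 hε)
  obtain ⟨η, hη, hgood⟩ := exists_forall_tauAdm_ofReal_le_measure_admissibleSlice
    (volume : Measure (Euc (d - k))) hτ hs
  exact ⟨η, hη, fun r₁ r₂ r₃ hr => ⟨closedBall 0 s, closedBall 0 1 \ closedBall 0 s,
    measurableSet_closedBall, measurableSet_closedBall.diff measurableSet_closedBall,
    disjoint_sdiff_self_right, Set.union_sdiff_cancel (closedBall_subset_closedBall hs.le), hB,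
    fun x₃ hx₃ => hgood (r₁, r₂, r₃) hr x₃ hx₃⟩⟩

/-- Lemma 3.2. -/
theorem paininneck (d k : ℕ) (hd : 2 ≤ d) (hk : 1 ≤ k) (hk' : k ≤ d - 1)
    (τ ε : ℝ) (hτ : 0 < τ) (hε : 0 < ε) :
    ∃ η : ℝ, 0 < η ∧
      ∀ r₁ r₂ r₃ : ℝ, TauAdm τ r₁ r₂ r₃ →
        ∃ G B : Set (Euc (d-k)), MeasurableSet G ∧ MeasurableSet B ∧
          Disjoint G B ∧ G ∪ B = Metric.closedBall 0 1 ∧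
          volume B < ENNReal.ofReal ε ∧
          ∀ x₃ ∈ G, ENNReal.ofReal η ≤
            volume {x₁ : Euc (d-k) | ‖x₁‖ ≤ 1 ∧ ‖-(r₂⁻¹ • (r₁ • x₁ + r₃ • x₃))‖ ≤ 1 ∧
              TauAdm η (r₁ * Real.sqrt (1 - ‖x₁‖^2))
                (r₂ * Real.sqrt (1 - ‖-(r₂⁻¹ • (r₁ • x₁ + r₃ • x₃))‖^2))
                (r₃ * Real.sqrt (1 - ‖x₃‖^2))} :=
  paininneck_general d k τ ε hτ hε
end

section
/- Let d ≥ 2. Let φ : ℕ → (0,∞) satisfy φ(K) → 0 as K → ∞, and let (ϱ_ν)_{ν∈ℕ} be positive reals with ϱ_ν → 0. Let (E^ν)_{ν∈ℕ} be a sequence of measurable subsets of ℝ^d satisfying E^ν = (E^ν)^{†★} and |E^ν| = |𝔹_d| for all ν, and suppose that for every ν and every K ∈ ℕ one has Σ_{k ∈ ℤ, |k| > K} |E^ν_k| ≤ φ(K) + ϱ_ν, where E^ν_k = {(x',t) ∈ E^ν : 2^{k−1} ≤ h_ν(x') < 2^k} and h_ν(x') = |(E^ν)^{x'}|. Then the family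 {E^ν : ν ∈ ℕ} is precompact: every subsequence has a further subsequence (E^{ν_m}) and a measurable set E ⊆ ℝ^d with |E^{ν_m} Δ E| → 0. -/
open MeasureTheory Metric Filter
open scoped ENNReal Pointwise Topology

/-- The dyadic layers of Lemma 5.6 (with the convention `2^{k-1} ≤ h < 2^k`). -/
noncomputable def layer' (d : ℕ) (E : Set (Euc d)) (k : ℤ) : Set (Euc d) :=
  {x ∈ E | ENNReal.ofReal ((2:ℝ) ^ (k-1)) ≤ volume (sliceV d E (projHead d x)) ∧
    volume (sliceV d E (projHead d x)) < ENNReal.ofReal ((2:ℝ) ^ k)}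

/-! A doubly symmetric set `E = E^{†★}` is determined by its radial profile:
`E = {(x', t) : 0 < w(|x'|), 2|t| ≤ w(|x'|)}` for the nonincreasing `w(|x'|) = |E^{x'}|`.
Helly's selection theorem gives a subsequence along which the profiles converge at every
continuity point of a nonincreasing limit `w`, hence at almost every `x'`, so the sets converge
pointwise a.e. to the set `F` built from `w`. Since `|E| = |𝔹_d|`, a profile value `≥ 2^{-K-1}`
forces `|x'|` to be bounded, so outside a bounded cylinder `E` lies in the layers with `|k| > K`,
of total measure at most `φ(K) + ϱ_ν`. This tightness turns pointwise a.e. convergence into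
`|E^{ν_m} Δ F| → 0`: dominated convergence inside the cylinder, Fatou outside. -/

theorem exists_subseq_tendsto_of_antitoneOn (W : ℕ → ℝ → ℝ≥0∞)
    (hW : ∀ m, AntitoneOn (W m) (Set.Ioi 0)) :
    ∃ (t : ℕ → ℕ) (w : ℝ → ℝ≥0∞), StrictMono t ∧ Antitone w ∧
      ∀ r > 0, ContinuousAt w r → Tendsto (fun m => W (t m) r) atTop (𝓝 (w r)) := by
  -- extract convergence on `ℚ` by compactness of `ℚ → ℝ≥0∞`; `w r` is the right limit at `r`
  obtain ⟨g, -, t, ht, hg⟩ := isCompact_univ.tendsto_subseq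
    (x := fun m (q : ℚ) => W m q) fun _ => Set.mem_univ _
  rw [tendsto_pi_nhds] at hg
  refine ⟨t, fun r => ⨆ q : {q : ℚ // r < q}, g q, ht,
    fun a b hab => iSup_le fun q => le_iSup_of_le ⟨q, hab.trans_lt q.2⟩ le_rfl,
    fun r hr hcont => tendsto_of_le_liminf_of_limsup_le ?_ ?_⟩
  · refine iSup_le fun ⟨q, hq⟩ => ?_
    rw [← (hg q).liminf_eq]
    exact liminf_le_liminf (Eventually.of_forall fun m => hW _ hr (hr.trans hq) hq.le)
  · have hle : ∀ p < r, limsup (fun m => W (t m) r) atTop ≤ ⨆ q : {q : ℚ // p < q}, g q := by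
      intro p hp
      obtain ⟨q, hq, hqr⟩ := exists_rat_btwn (max_lt hp hr)
      calc limsup (fun m => W (t m) r) atTop ≤ limsup (fun m => W (t m) q) atTop :=
            limsup_le_limsup (Eventually.of_forall fun m =>
              hW _ ((le_max_right _ _).trans_lt hq) hr hqr.le)
        _ = g q := (hg q).limsup_eq
        _ ≤ _ := le_iSup_of_le ⟨q, (le_max_left _ _).trans_lt hq⟩ le_rfl
    exact ge_of_tendsto (hcont.tendsto.mono_left nhdsWithin_le_nhds : Tendsto _ (𝓝[<] r) _)
      (eventually_nhdsWithin_of_forall hle)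

section SetConvergence

variable {α ι : Type*} [MeasurableSpace α] {μ : Measure α} {L : Filter ι}
  [L.IsCountablyGenerated] {A : ι → Set α} {B : Set α}

lemma measure_le_liminf_of_ae_eventually_mem (hA : ∀ m, MeasurableSet (A m))
    (hB : MeasurableSet B) (h : ∀ᵐ x ∂μ, x ∈ B → ∀ᶠ m in L, x ∈ A m) :
    μ B ≤ liminf (fun m => μ (A m)) L := by
  simp_rw [← lintegral_indicator_one hB, ← lintegral_indicator_one (hA _)]
  refine (lintegral_mono_ae ?_).trans
    (lintegral_liminf_le fun m => measurable_const.indicator (hA m))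
  filter_upwards [h] with x hx
  by_cases hxB : x ∈ B
  · rw [Set.indicator_of_mem hxB]
    exact le_liminf_of_le (by isBoundedDefault)
      ((hx hxB).mono fun m hm => (Set.indicator_of_mem hm _).ge)
  · simp [Set.indicator_of_notMem hxB]

theorem tendsto_measure_symmDiff_of_ae_of_tight [L.NeBot] (hA : ∀ m, MeasurableSet (A m))
    (hB : MeasurableSet B) (hlim : ∀ᵐ x ∂μ, ∀ᶠ m in L, x ∈ A m ↔ x ∈ B)
    (htight : ∀ ε > 0, ∃ Q, MeasurableSet Q ∧ μ Q ≠ ⊤ ∧ ∀ᶠ m in L, μ (A m \ Q) ≤ ε) :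
    Tendsto (fun m => μ (symmDiff (A m) B)) L (𝓝 0) := by
  refine ENNReal.tendsto_nhds_zero.mpr fun ε hε => ?_
  obtain ⟨Q, hQ, hQfin, hAQ⟩ := htight (ε / 3) (ENNReal.div_pos hε.ne' ENNReal.ofNat_ne_top)
  have hinside : Tendsto (fun m => μ (symmDiff (A m) B ∩ Q)) L (𝓝 0) := by
    simpa using tendsto_measure_of_ae_tendsto_indicator L MeasurableSet.empty
      (fun m => ((hA m).symmDiff hB).inter hQ) hQ hQfin
      (Eventually.of_forall fun m => Set.inter_subset_right)
      (by filter_upwards [hlim] with x hx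
          filter_upwards [hx] with m hm
          simp [Set.mem_symmDiff, hm])
  have houtside : μ (B \ Q) ≤ ε / 3 := by
    refine (measure_le_liminf_of_ae_eventually_mem (fun m => (hA m).diff hQ) (hB.diff hQ) ?_).trans
      (liminf_le_of_frequently_le' hAQ.frequently)
    filter_upwards [hlim] with x hx hxB
    filter_upwards [hx] with m hm
    exact ⟨hm.mpr hxB.1, hxB.2⟩
  filter_upwards [ENNReal.tendsto_nhds_zero.mp hinside (ε / 3)
    (ENNReal.div_pos hε.ne' ENNReal.ofNat_ne_top), hAQ] with m hin hout
  calc μ (symmDiff (A m) B)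
      ≤ μ (symmDiff (A m) B ∩ Q) + μ (A m \ Q) + μ (B \ Q) := by
        refine (measure_mono fun x hx => ?_).trans
          ((measure_union_le _ _).trans (by gcongr; exact measure_union_le _ _))
        by_cases hxQ : x ∈ Q
        · exact Or.inl (Or.inl ⟨hx, hxQ⟩)
        · rcases hx with ⟨hxA, -⟩ | ⟨hxB, -⟩
          · exact Or.inl (Or.inr ⟨hxA, hxQ⟩)
          · exact Or.inr ⟨hxB, hxQ⟩
    _ ≤ ε / 3 + ε / 3 + ε / 3 := by gcongr
    _ = ε := ENNReal.add_thirds ε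

end SetConvergence

section HaarBalls

variable {F : Type*} [NormedAddCommGroup F] [NormedSpace ℝ F] [MeasurableSpace F] [BorelSpace F]
  [FiniteDimensional ℝ F] [Nontrivial F] (μ : Measure F) [μ.IsAddHaarMeasure]

lemma ae_norm_notMem {J : Set ℝ} (hJ : J.Countable) : ∀ᵐ x ∂μ, ‖x‖ ∉ J := by
  refine measure_mono_null (fun x hx => ?_)
    ((measure_biUnion_null_iff hJ).mpr fun r _ => Measure.addHaar_sphere μ 0 r)
  exact Set.mem_biUnion (not_not.mp hx) (mem_sphere_zero_iff_norm.mpr rfl)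

lemma ae_tendsto_norm_of_forall_continuousAt {ι : Type*} {L : Filter ι}
    {W : ι → ℝ → ℝ≥0∞} {w : ℝ → ℝ≥0∞} (hw : Antitone w)
    (hconv : ∀ r > 0, ContinuousAt w r → Tendsto (fun m => W m r) L (𝓝 (w r))) :
    ∀ᵐ x ∂μ, Tendsto (fun m => W m ‖x‖) L (𝓝 (w ‖x‖)) := by
  filter_upwards [ae_norm_notMem μ
    (hw.countable_not_continuousAt.union (Set.countable_singleton 0))] with x hx
  exact hconv _ ((norm_nonneg x).lt_of_ne' fun h => hx (Or.inr h))
    (not_not.mp fun h => hx (Or.inl h))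

lemma exists_lt_measure_closedBall_mul {c a : ℝ≥0∞} (hc : c ≠ ⊤) (ha : a ≠ 0) :
    ∃ R : ℝ, c < μ (closedBall 0 R) * a := by
  have hmono : Monotone fun R : ℕ => closedBall (0 : F) R :=
    fun _ _ h => closedBall_subset_closedBall (Nat.cast_le.mpr h)
  have hlim := ENNReal.Tendsto.mul_const (b := a) (tendsto_measure_iUnion_atTop (μ := μ) hmono)
    (Or.inl (by simp [iUnion_closedBall_nat, measure_univ_of_isAddLeftInvariant]))
  rw [iUnion_closedBall_nat, measure_univ_of_isAddLeftInvariant, ENNReal.top_mul ha] at hlim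
  obtain ⟨R, hR⟩ := (hlim.eventually (lt_mem_nhds hc.lt_top)).exists
  exact ⟨R, hR⟩

end HaarBalls

section Coordinates

variable {n : ℕ}

@[simp]
lemma projHead_join (x' : Euc (n+1)) (t : ℝ) : projHead (n+2) (join (n+2) x' t) = x' := by
  ext i
  simp only [projHead, _root_.join, PiLp.toLp_apply, dif_pos i.isLt]

@[simp]
lemma lastC_join (x' : Euc (n+1)) (t : ℝ) : lastC (n+2) (join (n+2) x' t) = t := by
  simp [lastC, _root_.join]

def headLastEquiv (n : ℕ) : Euc (n+2) ≃ᵐ Euc (n+1) × ℝ :=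
  ((MeasurableEquiv.toLp 2 (Fin (n+2) → ℝ)).symm.trans
    ((MeasurableEquiv.piFinSuccAbove (fun _ : Fin (n+2) => ℝ) (Fin.last (n+1))).trans
      ((MeasurableEquiv.refl ℝ).prodCongr (MeasurableEquiv.toLp 2 (Fin (n+1) → ℝ))))).trans
    MeasurableEquiv.prodComm

lemma headLastEquiv_apply (x : Euc (n+2)) :
    headLastEquiv n x = (projHead (n+2) x, lastC (n+2) x) := by
  ext i
  · exact congrArg x.ofLp (Fin.ext (by simp))
  · simp only [lastC, dif_pos (Nat.succ_pos (n+1))]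
    rfl

lemma join_projHead_lastC (x : Euc (n+2)) :
    join (n+2) (projHead (n+2) x) (lastC (n+2) x) = x :=
  (headLastEquiv n).injective (by simp only [headLastEquiv_apply, projHead_join, lastC_join])

lemma exists_join_eq_iff {P : Euc (n+1) → ℝ → Prop} (x : Euc (n+2)) :
    (∃ x' t, x = join (n+2) x' t ∧ P x' t) ↔ P (projHead (n+2) x) (lastC (n+2) x) :=
  ⟨by rintro ⟨x', t, rfl, h⟩; simpa using h,
    fun h => ⟨_, _, (join_projHead_lastC x).symm, h⟩⟩

lemma measurePreserving_headLastEquiv (n : ℕ) :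
    MeasurePreserving (headLastEquiv n) volume volume := by
  have hsplit := volume_preserving_piFinSuccAbove (fun _ : Fin (n+2) => ℝ) (Fin.last (n+1))
  have hlp : MeasurePreserving ((MeasurableEquiv.refl ℝ).prodCongr
      (MeasurableEquiv.toLp 2 (Fin (n+1) → ℝ))) volume volume := by
    have := (MeasurePreserving.id (volume : Measure ℝ)).prod
      (EuclideanSpace.volume_preserving_symm_measurableEquiv_toLp (Fin (n+1))).symm
    rwa [← Measure.volume_eq_prod, ← Measure.volume_eq_prod] at this
  have hswap : MeasurePreserving (MeasurableEquiv.prodComm : ℝ × Euc (n+1) ≃ᵐ _)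
      volume volume := by
    have := Measure.measurePreserving_swap (μ := (volume : Measure ℝ))
      (ν := (volume : Measure (Euc (n+1))))
    rwa [← Measure.volume_eq_prod, ← Measure.volume_eq_prod] at this
  exact (((EuclideanSpace.volume_preserving_symm_measurableEquiv_toLp (Fin (n+2))).trans
    hsplit).trans hlp).trans hswap

@[fun_prop]
lemma measurable_projHead : Measurable (projHead (n+2)) := by
  simpa [Function.comp_def, headLastEquiv_apply] using
    measurable_fst.comp (headLastEquiv n).measurable

@[fun_prop]
lemma measurable_lastC : Measurable (lastC (n+2)) := by
  simpa [Function.comp_def, headLastEquiv_apply] using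
    measurable_snd.comp (headLastEquiv n).measurable

lemma volume_headLastEquiv_preimage_prod (A : Set (Euc (n+1))) (I : Set ℝ) :
    volume (headLastEquiv n ⁻¹' A ×ˢ I) = volume A * volume I := by
  rw [(measurePreserving_headLastEquiv n).measure_preimage_equiv, Measure.volume_eq_prod,
    Measure.prod_prod]

end Coordinates

lemma volume_setOf_ofReal_two_mul_abs_le {c : ℝ≥0∞} (hc : 0 < c) :
    volume {t : ℝ | ENNReal.ofReal (2 * |t|) ≤ c} = c := by
  rcases eq_or_ne c ⊤ with rfl | hctop
  · simp
  have : {t : ℝ | ENNReal.ofReal (2 * |t|) ≤ c} = Set.Icc (-(c.toReal / 2)) (c.toReal / 2) := by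
    ext t
    change ENNReal.ofReal _ ≤ c ↔ _
    rw [ENNReal.ofReal_le_iff_le_toReal hctop, Set.mem_Icc, ← abs_le]
    constructor <;> intro h <;> linarith
  rw [this, Real.volume_Icc, show c.toReal / 2 - -(c.toReal / 2) = c.toReal by ring,
    ENNReal.ofReal_toReal hctop]

lemma volume_setOf_ofReal_two_mul_abs_eq (c : ℝ≥0∞) :
    volume {t : ℝ | ENNReal.ofReal (2 * |t|) = c} = 0 := by
  refine measure_mono_null (fun t (ht : _ = c) => ?_)
    (((Set.finite_singleton (c.toReal / 2)).insert (-(c.toReal / 2))).measure_zero volume)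
  have : |t| = c.toReal / 2 := by
    rw [← ht, ENNReal.toReal_ofReal (by positivity)]
    ring
  rcases abs_eq (by positivity) |>.mp this with h | h <;> simp [h]

section SteinerSet

variable {n : ℕ}

def steinerSet (n : ℕ) (h : Euc (n+1) → ℝ≥0∞) : Set (Euc (n+2)) :=
  {x | 0 < h (projHead (n+2) x) ∧ ENNReal.ofReal (2 * |lastC (n+2) x|) ≤ h (projHead (n+2) x)}

lemma steiner_eq_steinerSet (S : Set (Euc (n+2))) :
    steiner (n+2) S = steinerSet n fun x' => volume (sliceV (n+2) S x') :=
  Set.ext fun x => exists_join_eq_iff x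

lemma measurableSet_steinerSet {h : Euc (n+1) → ℝ≥0∞} (hh : Measurable h) :
    MeasurableSet (steinerSet n h) := by
  have hh' : Measurable fun x => h (projHead (n+2) x) := hh.comp measurable_projHead
  exact (measurableSet_lt measurable_const hh').inter
    (measurableSet_le (by fun_prop) hh')

lemma volume_sliceV_steinerSet (h : Euc (n+1) → ℝ≥0∞) (x' : Euc (n+1)) :
    volume (sliceV (n+2) (steinerSet n h) x') = h x' := by
  rcases eq_zero_or_pos (h x') with hx | hx
  · rw [hx]
    refine measure_mono_null (fun t ht => ?_) measure_empty
    simpa [sliceV, steinerSet, hx] using ht.1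
  · convert volume_setOf_ofReal_two_mul_abs_le hx using 2
    ext t
    simp [sliceV, steinerSet, hx]

lemma volume_mul_le_volume_steinerSet {h : Euc (n+1) → ℝ≥0∞} {A : Set (Euc (n+1))}
    {c : ℝ≥0∞} (hA : ∀ x' ∈ A, c ≤ h x') : volume A * c ≤ volume (steinerSet n h) := by
  rcases eq_zero_or_pos c with rfl | hc
  · simp
  rw [← volume_setOf_ofReal_two_mul_abs_le hc, ← volume_headLastEquiv_preimage_prod]
  refine measure_mono fun x ⟨hx', ht⟩ => ?_
  rw [headLastEquiv_apply] at hx' ht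
  exact ⟨hc.trans_le (hA _ hx'), le_trans ht (hA _ hx')⟩

end SteinerSet

section SteinerSetConvergence

variable {n : ℕ} {ι : Type*} {L : Filter ι} {H : ι → Euc (n+1) → ℝ≥0∞} {h : Euc (n+1) → ℝ≥0∞}

lemma eventually_mem_steinerSet_iff {x : Euc (n+2)}
    (hlim : Tendsto (fun m => H m (projHead (n+2) x)) L (𝓝 (h (projHead (n+2) x))))
    (hne : ENNReal.ofReal (2 * |lastC (n+2) x|) ≠ h (projHead (n+2) x)) :
    ∀ᶠ m in L, x ∈ steinerSet n (H m) ↔ x ∈ steinerSet n h := by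
  rcases hne.lt_or_gt with hlt | hgt
  · filter_upwards [hlim.eventually (lt_mem_nhds hlt)] with m hm
    exact iff_of_true ⟨zero_le.trans_lt hm, hm.le⟩ ⟨zero_le.trans_lt hlt, hlt.le⟩
  · filter_upwards [hlim.eventually (gt_mem_nhds hgt)] with m hm
    exact iff_of_false (fun hx => hm.not_ge hx.2) (fun hx => hgt.not_ge hx.2)

lemma ae_eventually_mem_steinerSet_iff (hh : Measurable h)
    (hlim : ∀ᵐ x' : Euc (n+1), Tendsto (fun m => H m x') L (𝓝 (h x'))) :
    ∀ᵐ x : Euc (n+2), ∀ᶠ m in L, x ∈ steinerSet n (H m) ↔ x ∈ steinerSet n h := by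
  have hprod : ∀ᵐ p : Euc (n+1) × ℝ,
      Tendsto (fun m => H m p.1) L (𝓝 (h p.1)) ∧ ENNReal.ofReal (2 * |p.2|) ≠ h p.1 := by
    rw [Measure.volume_eq_prod]
    refine (Measure.quasiMeasurePreserving_fst.ae hlim).and ?_
    have hmeas : MeasurableSet {p : Euc (n+1) × ℝ | ENNReal.ofReal (2 * |p.2|) ≠ h p.1} :=
      (measurableSet_eq_fun (by fun_prop) (hh.comp measurable_fst)).compl
    rw [Measure.ae_prod_iff_ae_ae hmeas]
    refine ae_of_all _ fun x' => ?_
    simpa only [ae_iff, not_not] using volume_setOf_ofReal_two_mul_abs_eq (h x')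
  filter_upwards [(measurePreserving_headLastEquiv n).quasiMeasurePreserving.ae hprod] with x hx
  rw [headLastEquiv_apply] at hx
  exact eventually_mem_steinerSet_iff hx.1 hx.2

end SteinerSetConvergence

def boundedCylinder (n : ℕ) (R T : ℝ) : Set (Euc (n+2)) :=
  {x | ‖projHead (n+2) x‖ ≤ R ∧ |lastC (n+2) x| ≤ T}

lemma measurableSet_boundedCylinder {n : ℕ} (R T : ℝ) :
    MeasurableSet (boundedCylinder n R T) :=
  (measurableSet_le (measurable_norm.comp measurable_projHead) measurable_const).inter
    (measurableSet_le (measurable_lastC.abs) measurable_const)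

lemma volume_boundedCylinder_ne_top {n : ℕ} (R T : ℝ) : volume (boundedCylinder n R T) ≠ ⊤ := by
  have : boundedCylinder n R T = headLastEquiv n ⁻¹' closedBall 0 R ×ˢ Set.Icc (-T) T := by
    ext x
    simp [boundedCylinder, headLastEquiv_apply, ← abs_le]
  rw [this, volume_headLastEquiv_preimage_prod, Real.volume_Icc]
  exact ENNReal.mul_ne_top measure_closedBall_lt_top.ne ENNReal.ofReal_ne_top

section RadialSteinerSet

variable {n : ℕ} {w : ℝ → ℝ≥0∞}

lemma volume_closedBall_mul_le_volume_steinerSet (hw : AntitoneOn w (Set.Ici 0)) (r : ℝ) :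
    volume (closedBall (0 : Euc (n+1)) r) * w r ≤ volume (steinerSet n fun x' => w ‖x'‖) := by
  refine volume_mul_le_volume_steinerSet fun x' hx' => ?_
  rw [mem_closedBall_zero_iff] at hx'
  exact hw (norm_nonneg x') ((norm_nonneg x').trans hx') hx'

lemma ne_top_of_volume_steinerSet_ne_top (hw : AntitoneOn w (Set.Ici 0))
    (hS : volume (steinerSet n fun x' => w ‖x'‖) ≠ ⊤) {r : ℝ} (hr : 0 < r) : w r ≠ ⊤ := by
  intro htop
  have := volume_closedBall_mul_le_volume_steinerSet (n := n) hw r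
  rw [htop, ENNReal.mul_top (measure_closedBall_pos volume 0 hr).ne', top_le_iff] at this
  exact hS this

lemma lt_of_volume_steinerSet_lt (hw : AntitoneOn w (Set.Ici 0)) {R r : ℝ} {a : ℝ≥0∞}
    (hR : volume (steinerSet n fun x' => w ‖x'‖) < volume (closedBall (0 : Euc (n+1)) R) * a)
    (hr : R ≤ r) : w r < a := by
  by_contra! h
  refine hR.not_ge ?_
  calc volume (closedBall (0 : Euc (n+1)) R) * a
      ≤ volume (closedBall (0 : Euc (n+1)) r) * w r :=
        mul_le_mul' (measure_mono (closedBall_subset_closedBall hr)) h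
    _ ≤ _ := volume_closedBall_mul_le_volume_steinerSet hw r

end RadialSteinerSet

section Layers

variable {n : ℕ} {w : ℝ → ℝ≥0∞}

lemma mem_layer'_steinerSet_iff {h : Euc (n+1) → ℝ≥0∞} {x : Euc (n+2)} {k : ℤ} :
    x ∈ layer' (n+2) (steinerSet n h) k ↔ x ∈ steinerSet n h ∧
      ENNReal.ofReal (2 ^ (k-1)) ≤ h (projHead (n+2) x) ∧
      h (projHead (n+2) x) < ENNReal.ofReal (2 ^ k) := by
  simp only [layer', volume_sliceV_steinerSet]
  rfl

lemma exists_mem_layer' (hw : AntitoneOn w (Set.Ici 0))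
    (hS : volume (steinerSet n fun x' => w ‖x'‖) ≠ ⊤) {x : Euc (n+2)}
    (hx : x ∈ steinerSet n fun x' => w ‖x'‖) (hx0 : projHead (n+2) x ≠ 0) :
    ∃ k : ℤ, x ∈ layer' (n+2) (steinerSet n fun x' => w ‖x'‖) k := by
  have hpos : 0 < w ‖projHead (n+2) x‖ := hx.1
  have htop := ne_top_of_volume_steinerSet_ne_top hw hS (norm_pos_iff.mpr hx0)
  obtain ⟨k, hlo, hhi⟩ := exists_mem_Ico_zpow (ENNReal.toReal_pos hpos.ne' htop) one_lt_two
  refine ⟨k + 1, mem_layer'_steinerSet_iff.mpr ⟨hx, ?_, ?_⟩⟩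
  · rwa [add_sub_cancel_right, ENNReal.ofReal_le_iff_le_toReal htop]
  · rwa [ENNReal.lt_ofReal_iff_toReal_lt htop]

/- Outside the cylinder, either `‖x'‖ > R`, where `hR` forces the profile below `2^{-K-1}`
(so `k < -K`), or `|t| > 2^K`, which forces it above `2^{K+1}` (so `k > K + 1`). -/
lemma lt_abs_of_mem_layer'_of_notMem_boundedCylinder (hw : AntitoneOn w (Set.Ici 0))
    {K : ℕ} {R : ℝ} {k : ℤ} {x : Euc (n+2)} (hR : volume (steinerSet n fun x' => w ‖x'‖) <
      volume (closedBall (0 : Euc (n+1)) R) * ENNReal.ofReal (2 ^ (-(K : ℤ) - 1)))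
    (hxk : x ∈ layer' (n+2) (steinerSet n fun x' => w ‖x'‖) k)
    (hxQ : x ∉ boundedCylinder n R (2 ^ K)) : (K : ℤ) < |k| := by
  obtain ⟨hx, hlo, hhi⟩ := mem_layer'_steinerSet_iff.mp hxk
  simp only [boundedCylinder, Set.mem_ofPred, not_and_or, not_le] at hxQ
  rw [lt_abs]
  rcases hxQ with hr | ht
  · have hlt := hlo.trans_lt (lt_of_volume_steinerSet_lt hw hR hr.le)
    rw [ENNReal.ofReal_lt_ofReal_iff (by positivity), zpow_lt_zpow_iff_right₀ one_lt_two] at hlt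
    omega
  · have hlt : ENNReal.ofReal (2 ^ ((K : ℤ) + 1)) < ENNReal.ofReal (2 ^ k) := by
      refine lt_of_lt_of_le ?_ (hx.2.trans_lt hhi).le
      rw [ENNReal.ofReal_lt_ofReal_iff_of_nonneg (by positivity), zpow_add_one₀ two_ne_zero]
      simp only [zpow_natCast]
      linarith
    rw [ENNReal.ofReal_lt_ofReal_iff (by positivity), zpow_lt_zpow_iff_right₀ one_lt_two] at hlt
    omega

lemma volume_projHead_eq_zero : volume {x : Euc (n+2) | projHead (n+2) x = 0} = 0 := by
  have : {x : Euc (n+2) | projHead (n+2) x = 0} = headLastEquiv n ⁻¹' {0} ×ˢ Set.univ := by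
    ext x
    simp [headLastEquiv_apply]
  rw [this, volume_headLastEquiv_preimage_prod]
  simp

lemma exists_volume_diff_le_tsum_layer' (K : ℕ) {c : ℝ≥0∞} (hc : c ≠ ⊤) :
    ∃ Q : Set (Euc (n+2)), MeasurableSet Q ∧ volume Q ≠ ⊤ ∧
      ∀ w : ℝ → ℝ≥0∞, AntitoneOn w (Set.Ici 0) → volume (steinerSet n fun x' => w ‖x'‖) ≤ c →
        volume ((steinerSet n fun x' => w ‖x'‖) \ Q) ≤ ∑' k : ℤ,
          if (K : ℤ) < |k| then volume (layer' (n+2) (steinerSet n fun x' => w ‖x'‖) k) else 0 := by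
  obtain ⟨R, hR⟩ := exists_lt_measure_closedBall_mul (volume : Measure (Euc (n+1))) hc
    (ENNReal.ofReal_pos.mpr (zpow_pos two_pos (-(K : ℤ) - 1))).ne'
  refine ⟨boundedCylinder n R (2 ^ K), measurableSet_boundedCylinder _ _,
    volume_boundedCylinder_ne_top _ _, fun w hw hS => ?_⟩
  set S := steinerSet n fun x' => w ‖x'‖
  set layers := ⋃ k : ℤ, if (K : ℤ) < |k| then layer' (n+2) S k else ∅
  have hsub : S \ boundedCylinder n R (2 ^ K) ⊆ layers ∪ {x | projHead (n+2) x = 0} := by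
    rintro x ⟨hx, hxQ⟩
    by_cases hx0 : projHead (n+2) x = 0
    · exact Or.inr hx0
    obtain ⟨k, hk⟩ := exists_mem_layer' hw (hS.trans_lt hc.lt_top).ne hx hx0
    refine Or.inl (Set.mem_iUnion.mpr ⟨k, ?_⟩)
    rwa [if_pos (lt_abs_of_mem_layer'_of_notMem_boundedCylinder hw (hS.trans_lt hR) hk hxQ)]
  calc volume (S \ boundedCylinder n R (2 ^ K))
      ≤ volume layers + volume {x : Euc (n+2) | projHead (n+2) x = 0} :=
        (measure_mono hsub).trans (measure_union_le _ _)
    _ ≤ ∑' k : ℤ, volume (if (K : ℤ) < |k| then layer' (n+2) S k else ∅) := by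
        rw [volume_projHead_eq_zero, add_zero]
        exact measure_iUnion_le _
    _ = _ := tsum_congr fun k => by split_ifs <;> simp

end Layers

section DoublySymmetric

variable {n : ℕ}

noncomputable def schwarzProfile (n : ℕ) (E : Set (Euc (n+2))) (r : ℝ) : ℝ≥0∞ :=
  volume {t : ℝ | 0 < volume (sliceH (n+2) E t) ∧
    ENNReal.ofReal ((volume (closedBall (0 : Euc (n+1)) 1)).toReal * r ^ (n+1)) ≤
      volume (sliceH (n+2) E t)}

lemma volume_sliceV_schwarz (E : Set (Euc (n+2))) (x' : Euc (n+1)) :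
    volume (sliceV (n+2) (schwarz (n+2) E) x') = schwarzProfile n E ‖x'‖ := by
  congr 1
  ext t
  exact (exists_join_eq_iff (join (n+2) x' t)).trans (by simp)

lemma eq_steinerSet_schwarzProfile {E : Set (Euc (n+2))} (hE : E = dagStar (n+2) E) :
    E = steinerSet n fun x' => schwarzProfile n E ‖x'‖ := by
  conv_lhs => rw [hE]
  simp only [dagStar, steiner_eq_steinerSet, volume_sliceV_schwarz]

lemma antitoneOn_schwarzProfile (E : Set (Euc (n+2))) :
    AntitoneOn (schwarzProfile n E) (Set.Ici 0) := fun _ ha _ _ hab =>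
  measure_mono fun _ ht => ⟨ht.1, le_trans (ENNReal.ofReal_le_ofReal
    (mul_le_mul_of_nonneg_left (pow_le_pow_left₀ ha hab _) ENNReal.toReal_nonneg)) ht.2⟩

lemma measurable_schwarzProfile (E : Set (Euc (n+2))) : Measurable (schwarzProfile n E) := by
  have hanti : Antitone fun a : ℝ≥0∞ =>
      volume {t : ℝ | 0 < volume (sliceH (n+2) E t) ∧ a ≤ volume (sliceH (n+2) E t)} :=
    fun _ _ hab => measure_mono fun _ ht => ⟨ht.1, hab.trans ht.2⟩
  exact hanti.measurable.comp (by fun_prop)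

lemma measurableSet_of_eq_dagStar {E : Set (Euc (n+2))} (hE : E = dagStar (n+2) E) :
    MeasurableSet E := by
  rw [eq_steinerSet_schwarzProfile hE]
  exact measurableSet_steinerSet ((measurable_schwarzProfile E).comp measurable_norm)

lemma exists_volume_diff_le_tsum_layer'_of_eq_dagStar (K : ℕ) {c : ℝ≥0∞} (hc : c ≠ ⊤) :
    ∃ Q : Set (Euc (n+2)), MeasurableSet Q ∧ volume Q ≠ ⊤ ∧
      ∀ E : Set (Euc (n+2)), E = dagStar (n+2) E → volume E ≤ c →
        volume (E \ Q) ≤ ∑' k : ℤ, if (K : ℤ) < |k| then volume (layer' (n+2) E k) else 0 := by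
  obtain ⟨Q, hQ, hQfin, hQtail⟩ := exists_volume_diff_le_tsum_layer' (n := n) K hc
  refine ⟨Q, hQ, hQfin, fun E hE hEc => ?_⟩
  rw [eq_steinerSet_schwarzProfile hE] at hEc ⊢
  exact hQtail _ (antitoneOn_schwarzProfile E) hEc

end DoublySymmetric

theorem sstar_precompactness_general (d : ℕ) (hd : 2 ≤ d)
    (φ : ℕ → ℝ) (hφ : Tendsto φ atTop (nhds 0))
    (ϱ : ℕ → ℝ) (hϱ : Tendsto ϱ atTop (nhds 0))
    (E : ℕ → Set (Euc d))
    (hsym : ∀ ν, E ν = dagStar d (E ν))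
    (hvol : ∀ ν, volume (E ν) = volume (Metric.closedBall (0 : Euc d) 1))
    (hbd : ∀ (ν : ℕ) (K : ℕ), (∑' k : ℤ, (if (K : ℤ) < |k| then volume (layer' d (E ν) k) else 0))
        ≤ ENNReal.ofReal (φ K + ϱ ν)) :
    ∀ s : ℕ → ℕ, StrictMono s →
      ∃ t : ℕ → ℕ, StrictMono t ∧
        ∃ F : Set (Euc d), MeasurableSet F ∧
          Tendsto (fun m => volume (symmDiff (E (s (t m))) F)) atTop (nhds 0) := by
  obtain ⟨n, rfl⟩ : ∃ n, d = n + 2 := ⟨d - 2, by omega⟩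
  intro s hs
  obtain ⟨t, w, ht, hw, hconv⟩ := exists_subseq_tendsto_of_antitoneOn
    (fun ν => schwarzProfile n (E (s ν)))
    fun ν => (antitoneOn_schwarzProfile _).mono Set.Ioi_subset_Ici_self
  have hF : MeasurableSet (steinerSet n fun x' => w ‖x'‖) :=
    measurableSet_steinerSet (hw.measurable.comp measurable_norm)
  refine ⟨t, ht, _, hF, tendsto_measure_symmDiff_of_ae_of_tight
    (fun m => measurableSet_of_eq_dagStar (hsym _)) hF ?_ ?_⟩
  · simpa only [← eq_steinerSet_schwarzProfile (hsym _)] using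
      ae_eventually_mem_steinerSet_iff (h := fun x' => w ‖x'‖)
        (hw.measurable.comp measurable_norm)
        (ae_tendsto_norm_of_forall_continuousAt (volume : Measure (Euc (n+1))) hw hconv)
  · intro ε hε
    obtain ⟨K, hK⟩ := ((ENNReal.tendsto_ofReal hφ).eventually
      (gt_mem_nhds (by rwa [ENNReal.ofReal_zero]))).exists
    obtain ⟨Q, hQ, hQfin, hQtail⟩ := exists_volume_diff_le_tsum_layer'_of_eq_dagStar (n := n) K
      (measure_closedBall_lt_top (μ := volume) (x := (0 : Euc (n+2))) (r := 1)).ne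
    have hlim := ENNReal.tendsto_ofReal ((hϱ.comp (hs.comp ht).tendsto_atTop).const_add (φ K))
    rw [add_zero] at hlim
    refine ⟨Q, hQ, hQfin, ?_⟩
    filter_upwards [hlim.eventually (gt_mem_nhds hK)] with m hm
    exact (hQtail _ (hsym _) (hvol _).le).trans ((hbd _ K).trans hm.le)

/-- Lemma 5.6: precompactness of uniformly layered doubly symmetric sets. -/
theorem sstar_precompactness (d : ℕ) (hd : 2 ≤ d)
    (φ : ℕ → ℝ) (hφpos : ∀ K, 0 < φ K) (hφ : Tendsto φ atTop (nhds 0))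
    (ϱ : ℕ → ℝ) (hϱpos : ∀ ν, 0 < ϱ ν) (hϱ : Tendsto ϱ atTop (nhds 0))
    (E : ℕ → Set (Euc d)) (hmeas : ∀ ν, MeasurableSet (E ν))
    (hsym : ∀ ν, E ν = dagStar d (E ν))
    (hvol : ∀ ν, volume (E ν) = volume (Metric.closedBall (0 : Euc d) 1))
    (hbd : ∀ (ν : ℕ) (K : ℕ), (∑' k : ℤ, (if (K : ℤ) < |k| then volume (layer' d (E ν) k) else 0))
        ≤ ENNReal.ofReal (φ K + ϱ ν)) :
    ∀ s : ℕ → ℕ, StrictMono s →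
      ∃ t : ℕ → ℕ, StrictMono t ∧
        ∃ F : Set (Euc d), MeasurableSet F ∧
          Tendsto (fun m => volume (symmDiff (E (s (t m))) F)) atTop (nhds 0) :=
  sstar_precompactness_general d hd φ hφ ϱ hϱ E hsym hvol hbd
end
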